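/- arXiv:1604.06543 — 8 statements merged into one kernel-verified Lean document; each statement's English description precedes it below -/
import Mathlib

section
/- Let f : ℝⁿ → ℝ be differentiable and α-strongly convex with minimizer x* and minimum value f*. Then for every x, x* lies in the closed ball centered at x − (1/α)∇f(x) of squared radius ‖∇f(x)‖²/α² − (2/α)(f(x) − f*). -/
open scoped RealInnerProductSpace

theorem stmt6 (n : ℕ) (f : EuclideanSpace ℝ (Fin n) → ℝ)
    (f' : EuclideanSpace ℝ (Fin n) → EuclideanSpace ℝ (Fin n))
    (α : ℝ) (hα : 0 < α)
    (hdiff : ∀ p, HasGradientAt f (f' p) p)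
    (hsc : ∀ p q, f p + ⟪f' p, q - p⟫ + α/2 * ‖q - p‖^2 ≤ f q)
    (xstar : EuclideanSpace ℝ (Fin n)) (hmin : ∀ p, f xstar ≤ f p)
    (x : EuclideanSpace ℝ (Fin n)) :
    ‖xstar - (x - (1/α) • f' x)‖^2 ≤ ‖f' x‖^2/α^2 - (2/α) * (f x - f xstar) := by
  have h := hsc x xstar
  have key : xstar - (x - (1/α) • f' x) = (xstar - x) + (1/α) • f' x := by
    module
  rw [key, norm_add_sq_real, real_inner_smul_right, norm_smul]
  have hc : ⟪xstar - x, f' x⟫ = ⟪f' x, xstar - x⟫ := real_inner_comm _ _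
  have h1 : ‖(1/α : ℝ)‖ = 1/α := abs_of_pos (by positivity)
  rw [h1, hc]
  set I := ⟪f' x, xstar - x⟫ with hI
  have hα' : α ≠ 0 := ne_of_gt hα
  have e1 : (1/α * ‖f' x‖)^2 = ‖f' x‖^2 / α^2 := by field_simp
  rw [e1]
  have h2 : (2/α) * (I + α/2 * ‖xstar - x‖^2) ≤ (2/α) * (f xstar - f x) := by
    apply mul_le_mul_of_nonneg_left _ (by positivity)
    linarith
  have e2 : (2/α) * (I + α/2 * ‖xstar - x‖^2) = 2 * (1/α * I) + ‖xstar - x‖^2 := by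
    field_simp
  rw [e2] at h2
  linarith
end

section
/- Let f : ℝⁿ → ℝ be differentiable, α-strongly convex, and β-smooth, with minimizer x* and minimum f*, and κ = β/α. Then for every x, x* lies in the closed ball centered at x⁺⁺ = x − (1/α)∇f(x) of squared radius (1 − 1/κ)‖∇f(x)‖²/α² − (2/α)(f(x⁺) − f*), where x⁺ = x − (1/β)∇f(x). -/
/-!
Completing the square in the strong-convexity lower bound at `x` confines every point `q` to the
ball around `x - (1/α)∇f(x)` of squared radius `‖∇f(x)‖²/α² - (2/α)(f x - f q)`. The smoothness
upper bound along the gradient step gives the descent estimate `f(x⁺) ≤ f x - ‖∇f(x)‖²/(2β)`, which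
trades `f x` for `f(x⁺)` in that radius; taking `q = x*` yields the claim.
-/

open scoped RealInnerProductSpace

variable {E : Type*} [NormedAddCommGroup E] [InnerProductSpace ℝ E]

lemma norm_sub_sub_smul_sq_le_of_strongConvex_bound {f : E → ℝ} {g p q : E} {α : ℝ}
    (hα : 0 < α) (h : f p + ⟪g, q - p⟫ + α / 2 * ‖q - p‖ ^ 2 ≤ f q) :
    ‖q - (p - (1 / α) • g)‖ ^ 2 ≤ ‖g‖ ^ 2 / α ^ 2 - 2 / α * (f p - f q) := by
  have hsq : ‖q - (p - (1 / α) • g)‖ ^ 2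
      = ‖q - p‖ ^ 2 + 2 / α * ⟪g, q - p⟫ + ‖g‖ ^ 2 / α ^ 2 := by
    rw [show q - (p - (1 / α) • g) = (q - p) + (1 / α) • g by abel, norm_add_sq_real,
      real_inner_smul_right, norm_smul, Real.norm_of_nonneg (by positivity), real_inner_comm]
    ring
  have hscaled := mul_le_mul_of_nonneg_left h (by positivity : (0 : ℝ) ≤ 2 / α)
  have hcancel : 2 / α * (α / 2 * ‖q - p‖ ^ 2) = ‖q - p‖ ^ 2 := by field_simp
  rw [mul_add, mul_add, hcancel] at hscaled
  linarith

lemma le_sub_norm_sq_div_of_smooth_bound {f : E → ℝ} {g p : E} {β : ℝ}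
    (h : f (p - (1 / β) • g)
      ≤ f p + ⟪g, p - (1 / β) • g - p⟫ + β / 2 * ‖p - (1 / β) • g - p‖ ^ 2) :
    f (p - (1 / β) • g) ≤ f p - ‖g‖ ^ 2 / (2 * β) := by
  rw [sub_sub_cancel_left, inner_neg_right, real_inner_smul_right, real_inner_self_eq_norm_sq,
    norm_neg, norm_smul, mul_pow, Real.norm_eq_abs, sq_abs] at h
  convert h using 1
  rcases eq_or_ne β 0 with rfl | hβ
  · simp -- `1 / 0 = 0`: the step is trivial and both sides are `f p`
  · field_simp
    ring

theorem stmt7_general (n : ℕ) (f : EuclideanSpace ℝ (Fin n) → ℝ)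
    (f' : EuclideanSpace ℝ (Fin n) → EuclideanSpace ℝ (Fin n))
    (α β : ℝ) (hα : 0 < α)
    (hsc : ∀ p q, f p + ⟪f' p, q - p⟫ + α/2 * ‖q - p‖^2 ≤ f q)
    (hsm : ∀ p q, f q ≤ f p + ⟪f' p, q - p⟫ + β/2 * ‖q - p‖^2)
    (xstar : EuclideanSpace ℝ (Fin n))
    (x : EuclideanSpace ℝ (Fin n)) :
    ‖xstar - (x - (1/α) • f' x)‖^2
      ≤ (1 - 1/(β/α)) * ‖f' x‖^2/α^2
        - (2/α) * (f (x - (1/β) • f' x) - f xstar) := by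
  have hball := norm_sub_sub_smul_sq_le_of_strongConvex_bound hα (hsc x xstar)
  have hdescent := le_sub_norm_sq_div_of_smooth_bound (hsm x (x - (1/β) • f' x))
  have hradius : (1 - 1/(β/α)) * ‖f' x‖^2/α^2 = ‖f' x‖^2/α^2 - 2/α * (‖f' x‖^2 / (2*β)) := by
    rw [one_div_div]
    field_simp
  rw [hradius]
  have hscaled := mul_le_mul_of_nonneg_left hdescent (by positivity : (0 : ℝ) ≤ 2 / α)
  linarith

theorem stmt7 (n : ℕ) (f : EuclideanSpace ℝ (Fin n) → ℝ)
    (f' : EuclideanSpace ℝ (Fin n) → EuclideanSpace ℝ (Fin n))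
    (α β : ℝ) (hα : 0 < α) (hαβ : α ≤ β)
    (hdiff : ∀ p, HasGradientAt f (f' p) p)
    (hsc : ∀ p q, f p + ⟪f' p, q - p⟫ + α/2 * ‖q - p‖^2 ≤ f q)
    (hsm : ∀ p q, f q ≤ f p + ⟪f' p, q - p⟫ + β/2 * ‖q - p‖^2)
    (xstar : EuclideanSpace ℝ (Fin n)) (hmin : ∀ p, f xstar ≤ f p)
    (x : EuclideanSpace ℝ (Fin n)) :
    ‖xstar - (x - (1/α) • f' x)‖^2
      ≤ (1 - 1/(β/α)) * ‖f' x‖^2/α^2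
        - (2/α) * (f (x - (1/β) • f' x) - f xstar) :=
  stmt7_general n f f' α β hα hsc hsm xstar x
end

section
/- Fix x ∈ ℝⁿ, R² > 0, h ∈ ℝⁿ, and ε ∈ (0,1). Then there exists a center c ∈ ℝⁿ such that B(x, R²) ∩ B(x + h, (1 − ε)‖h‖²) ⊆ B(c, (1 − ε)R²), where B(z, r²) denotes the closed Euclidean ball of center z and squared radius r². -/
/-! The center is `c = x + ε • h`. For every `y`, the parallelogram-type identity
`‖y - c‖² = (1 - ε) ‖y - x‖² + ε ‖y - (x + h)‖² - ε (1 - ε) ‖h‖²`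
holds, and on the intersection of the two balls the last two terms together are nonpositive. -/

variable {E : Type*} [NormedAddCommGroup E] [InnerProductSpace ℝ E]

theorem norm_sub_add_smul_sq (x h y : E) (t : ℝ) :
    ‖y - (x + t • h)‖ ^ 2 =
      (1 - t) * ‖y - x‖ ^ 2 + t * ‖y - (x + h)‖ ^ 2 - t * (1 - t) * ‖h‖ ^ 2 := by
  have hc : y - (x + t • h) = (y - x) - t • h := by abel
  have hb : y - (x + h) = (y - x) - h := by abel
  rw [hc, hb]
  generalize y - x = u
  rw [norm_sub_sq_real, norm_sub_sq_real, real_inner_smul_right, norm_smul,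
    Real.norm_eq_abs, mul_pow, sq_abs]
  ring

theorem norm_sub_add_smul_sq_le {x h y : E} {R2 t : ℝ} (ht : t ∈ Set.Icc (0 : ℝ) 1)
    (hx : ‖y - x‖ ^ 2 ≤ R2) (hxh : ‖y - (x + h)‖ ^ 2 ≤ (1 - t) * ‖h‖ ^ 2) :
    ‖y - (x + t • h)‖ ^ 2 ≤ (1 - t) * R2 := by
  obtain ⟨ht0, ht1⟩ := ht
  rw [norm_sub_add_smul_sq]
  nlinarith [mul_le_mul_of_nonneg_left hx (sub_nonneg.2 ht1),
    mul_le_mul_of_nonneg_left hxh ht0]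

theorem stmt8_general (n : ℕ) (x h : EuclideanSpace ℝ (Fin n)) (R2 ε : ℝ)
    (hε : ε ∈ Set.Ioo (0:ℝ) 1) :
    ∃ c : EuclideanSpace ℝ (Fin n), ∀ y : EuclideanSpace ℝ (Fin n),
      ‖y - x‖^2 ≤ R2 → ‖y - (x + h)‖^2 ≤ (1 - ε) * ‖h‖^2 →
        ‖y - c‖^2 ≤ (1 - ε) * R2 :=
  ⟨x + ε • h, fun _ hx hxh =>
    norm_sub_add_smul_sq_le (Set.Ioo_subset_Icc_self hε) hx hxh⟩

theorem stmt8 (n : ℕ) (x h : EuclideanSpace ℝ (Fin n)) (R2 ε : ℝ)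
    (hR2 : 0 < R2) (hε : ε ∈ Set.Ioo (0:ℝ) 1) :
    ∃ c : EuclideanSpace ℝ (Fin n), ∀ y : EuclideanSpace ℝ (Fin n),
      ‖y - x‖^2 ≤ R2 → ‖y - (x + h)‖^2 ≤ (1 - ε) * ‖h‖^2 →
        ‖y - c‖^2 ≤ (1 - ε) * R2 :=
  stmt8_general n x h R2 ε hε
end

section
/- Fix centers x_A, x_B ∈ ℝⁿ, squared radii r_A², r_B² > 0, and ε ∈ (0,1), and suppose ‖x_A − x_B‖² ≥ r_B². Then there exists c ∈ ℝⁿ such that for every δ > 0, B(x_A, r_A² − ε r_B² − δ) ∩ B(x_B, (1 − ε) r_B² − δ) ⊆ B(c, (1 − √ε) r_A² − δ). -/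
lemma conv_norm_sq {E : Type*} [NormedAddCommGroup E] [InnerProductSpace ℝ E]
    (u v : E) (t : ℝ) :
    ‖(1 - t) • u + t • v‖ ^ 2
      = (1 - t) * ‖u‖ ^ 2 + t * ‖v‖ ^ 2 - t * (1 - t) * ‖u - v‖ ^ 2 := by
  have h1 := real_inner_self_eq_norm_sq ((1 - t) • u + t • v)
  have h2 := real_inner_self_eq_norm_sq u
  have h3 := real_inner_self_eq_norm_sq v
  have h4 := real_inner_self_eq_norm_sq (u - v)
  simp only [inner_add_add_self, inner_sub_sub_self, real_inner_smul_left,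
    real_inner_smul_right, real_inner_comm u v] at h1 h4
  linear_combination (-1:ℝ) * h1 + ((1-t)^2 + t*(1-t)) * h2 + (t^2 + t*(1-t)) * h3 - t*(1-t) * h4

theorem stmt9 (n : ℕ) (xA xB : EuclideanSpace ℝ (Fin n)) (rA2 rB2 ε : ℝ)
    (hrA2 : 0 < rA2) (hrB2 : 0 < rB2) (hε : ε ∈ Set.Ioo (0:ℝ) 1)
    (hfar : ‖xA - xB‖^2 ≥ rB2) :
    ∃ c : EuclideanSpace ℝ (Fin n), ∀ δ : ℝ, 0 < δ →
      ∀ y : EuclideanSpace ℝ (Fin n),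
        ‖y - xA‖^2 ≤ rA2 - ε * rB2 - δ → ‖y - xB‖^2 ≤ (1 - ε) * rB2 - δ →
          ‖y - c‖^2 ≤ (1 - Real.sqrt ε) * rA2 - δ := by
  set t := Real.sqrt ε with ht
  have ht0 : 0 < t := Real.sqrt_pos.mpr hε.1
  have ht1 : t < 1 := by
    rw [ht, show (1:ℝ) = Real.sqrt 1 by simp]
    exact Real.sqrt_lt_sqrt hε.1.le hε.2
  have ht2 : t ^ 2 = ε := by
    rw [ht, sq, Real.mul_self_sqrt hε.1.le]
  refine ⟨xA + t • (xB - xA), fun δ hδ y h1 h2 => ?_⟩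
  have hyc : y - (xA + t • (xB - xA)) = (1 - t) • (y - xA) + t • (y - xB) := by
    module
  rw [hyc, conv_norm_sq]
  have hsub : (y - xA) - (y - xB) = -(xA - xB) := by module
  rw [hsub, norm_neg]
  nlinarith [sq_nonneg (‖y - xA‖), sq_nonneg (‖y - xB‖), mul_pos ht0 (sub_pos.mpr ht1)]
end

section
/- Let f : ℝⁿ → ℝ be differentiable, α-strongly convex and β-smooth with minimizer x*, minimum f*, and κ = β/α ≥ 1. If the iterates of the optimal quadratic averaging algorithm are defined (x_k via exact line search between c_{k−1} and x_{k−1}⁺, quadratic Q_k the optimal average of the strong-convexity lower model at x_k and Q_{k−1}, with v_k = min Q_k, c_k = argmin Q_k), then for every k ≥ 0: v_k ≤ f* ≤ f(x_k⁺) and f(x_k⁺) − v_k ≤ (1 − 1/√κ)^k (f(x_0⁺) − v_0). -/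
open scoped RealInnerProductSpace
set_option maxHeartbeats 1000000

lemma avg_norm_sq {E : Type*} [NormedAddCommGroup E] [InnerProductSpace ℝ E]
    (l : ℝ) (u w y : E) :
    l*‖y-u‖^2 + (1-l)*‖y-w‖^2 = ‖y - (l•u + (1-l)•w)‖^2 + l*(1-l)*‖u-w‖^2 := by
  simp only [← real_inner_self_eq_norm_sq, inner_sub_left, inner_sub_right,
    inner_add_left, inner_add_right, real_inner_smul_left, real_inner_smul_right,
    real_inner_comm u y, real_inner_comm w y, real_inner_comm w u]
  ring

lemma comp_sq {E : Type*} [NormedAddCommGroup E] [InnerProductSpace ℝ E]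
    {α : ℝ} (hα : α ≠ 0) (g p y : E) :
    α/2 * ‖y - (p - (1/α)•g)‖^2 = α/2*‖y-p‖^2 + ⟪g, y-p⟫ + ‖g‖^2/(2*α) := by
  simp only [← real_inner_self_eq_norm_sq, inner_sub_left, inner_sub_right,
    real_inner_smul_left, real_inner_smul_right,
    real_inner_comm g y, real_inner_comm g p]
  field_simp
  ring

theorem stmt12 (n : ℕ) (f : EuclideanSpace ℝ (Fin n) → ℝ)
    (f' : EuclideanSpace ℝ (Fin n) → EuclideanSpace ℝ (Fin n))
    (α β : ℝ) (hα : 0 < α) (hαβ : α ≤ β)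
    (hdiff : ∀ p, HasGradientAt f (f' p) p)
    (hsc : ∀ p q, f p + ⟪f' p, q - p⟫ + α/2 * ‖q - p‖^2 ≤ f q)
    (hsm : ∀ p q, f q ≤ f p + ⟪f' p, q - p⟫ + β/2 * ‖q - p‖^2)
    (xstar : EuclideanSpace ℝ (Fin n)) (hmin : ∀ p, f xstar ≤ f p)
    (x c : ℕ → EuclideanSpace ℝ (Fin n)) (v : ℕ → ℝ)
    (hv0 : v 0 = f (x 0) - ‖f' (x 0)‖^2/(2*α))
    (hc0 : c 0 = x 0 - (1/α) • f' (x 0))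
    (hx_seg : ∀ k, 1 ≤ k → ∃ s ∈ Set.Icc (0:ℝ) 1,
      x k = c (k-1) + s • ((x (k-1) - (1/β) • f' (x (k-1))) - c (k-1)))
    (hx_min : ∀ k, 1 ≤ k → ∀ s ∈ Set.Icc (0:ℝ) 1,
      f (x k) ≤ f (c (k-1) + s • ((x (k-1) - (1/β) • f' (x (k-1))) - c (k-1))))
    (hQ : ∀ k, 1 ≤ k → ∃ lam ∈ Set.Icc (0:ℝ) 1,
      c k = lam • (x k - (1/α) • f' (x k)) + (1 - lam) • c (k-1) ∧
      v k = v (k-1)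
        + ((f (x k) - ‖f' (x k)‖^2/(2*α)) - v (k-1)
            + α/2 * ‖(x k - (1/α) • f' (x k)) - c (k-1)‖^2) * lam
        - (α/2 * ‖(x k - (1/α) • f' (x k)) - c (k-1)‖^2) * lam^2 ∧
      ∀ μ ∈ Set.Icc (0:ℝ) 1,
        v (k-1)
          + ((f (x k) - ‖f' (x k)‖^2/(2*α)) - v (k-1)
              + α/2 * ‖(x k - (1/α) • f' (x k)) - c (k-1)‖^2) * μ
          - (α/2 * ‖(x k - (1/α) • f' (x k)) - c (k-1)‖^2) * μ^2 ≤ v k) :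
    ∀ k : ℕ,
      v k ≤ f xstar ∧ f xstar ≤ f (x k - (1/β) • f' (x k)) ∧
      f (x k - (1/β) • f' (x k)) - v k
        ≤ (1 - 1/Real.sqrt (β/α))^k * (f (x 0 - (1/β) • f' (x 0)) - v 0) := by
  have hβ : 0 < β := lt_of_lt_of_le hα hαβ
  have hα' : α ≠ 0 := ne_of_gt hα
  have hβ' : β ≠ 0 := ne_of_gt hβ
  -- the key lower-model invariant : v k + (α/2)‖y - c k‖² ≤ f y
  have hmodel : ∀ q y, f q - ‖f' q‖^2/(2*α) + α/2 * ‖y - (q - (1/α) • f' q)‖^2 ≤ f y := by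
    intro q y
    have h1 := hsc q y
    have h2 := comp_sq hα' (f' q) q y
    linarith
  have key : ∀ k, ∀ y, v k + α/2 * ‖y - c k‖^2 ≤ f y := by
    intro k
    induction k with
    | zero =>
      intro y
      rw [hv0, hc0]
      have := hmodel (x 0) y
      linarith
    | succ m ih =>
      intro y
      obtain ⟨lam, hlam, hck, hvk, -⟩ := hQ (m+1) (by omega)
      simp only [Nat.add_sub_cancel] at hck hvk
      set u := x (m+1) - (1/α) • f' (x (m+1)) with hu
      set a := f (x (m+1)) - ‖f' (x (m+1))‖^2/(2*α) with ha
      have havg := avg_norm_sq lam u (c m) y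
      have h1 : a + α/2 * ‖y - u‖^2 ≤ f y := hmodel (x (m+1)) y
      have h2 : v m + α/2 * ‖y - c m‖^2 ≤ f y := ih y
      have hcomb : v (m+1) + α/2 * ‖y - c (m+1)‖^2
          = lam * (a + α/2 * ‖y - u‖^2) + (1-lam) * (v m + α/2 * ‖y - c m‖^2) := by
        rw [hvk, hck]
        linear_combination (-(α/2)) * havg
      rw [hcomb]
      nlinarith [mul_le_mul_of_nonneg_left h1 hlam.1,
        mul_le_mul_of_nonneg_left h2 (sub_nonneg.2 hlam.2)]
  -- line-search optimality : ⟪f'(x k), c (k-1) - x k⟫ ≥ 0 for k ≥ 1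
  have hls : ∀ k, 1 ≤ k → 0 ≤ ⟪f' (x k), c (k-1) - x k⟫ := by
    intro k hk
    obtain ⟨s, hs, hxk⟩ := hx_seg k hk
    set cc := c (k-1) with hcc
    set p := x (k-1) - (1/β) • f' (x (k-1)) with hp
    set A := ⟪f' (x k), cc - x k⟫ with hA
    set B := β/2 * ‖cc - x k‖^2 with hB
    have hBnn : 0 ≤ B := by positivity
    have hstep : ∀ t : ℝ, 0 < t → t ≤ 1 → 0 ≤ A + t * B := by
      intro t ht0 ht1
      have hq : x k + t • (cc - x k) = cc + (s*(1-t)) • (p - cc) := by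
        rw [hxk]; module
      have hmem : s*(1-t) ∈ Set.Icc (0:ℝ) 1 := by
        constructor
        · nlinarith [hs.1, hs.2]
        · nlinarith [hs.1, hs.2]
      have hle : f (x k) ≤ f (x k + t • (cc - x k)) := by
        rw [hq]; exact hx_min k hk _ hmem
      have hsm' := hsm (x k) (x k + t • (cc - x k))
      have hd : (x k + t • (cc - x k)) - x k = t • (cc - x k) := by module
      rw [hd] at hsm'
      rw [real_inner_smul_right, norm_smul] at hsm'
      simp only [Real.norm_eq_abs] at hsm'
      have habs : |t|^2 = t^2 := sq_abs t
      have : 0 ≤ t * A + β/2 * (t^2 * ‖cc - x k‖^2) := by nlinarith [hle, hsm', habs]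
      nlinarith
    by_contra hneg
    push_neg at hneg
    have hnA : 0 < -A := by linarith
    have h1 := hstep (min 1 (-A/(2*(B+1)))) (lt_min one_pos (div_pos hnA (by positivity)))
      (min_le_left _ _)
    have h2 : min 1 (-A/(2*(B+1))) * B ≤ -A/2 := by
      have hm : min 1 (-A/(2*(B+1))) ≤ -A/(2*(B+1)) := min_le_right _ _
      have : -A/(2*(B+1)) * B ≤ -A/2 := by
        rw [div_mul_eq_mul_div, div_le_div_iff₀ (by positivity) (by norm_num)]
        nlinarith
      nlinarith [mul_le_mul_of_nonneg_right hm hBnn]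
    linarith
  -- descent step : f(x⁺) ≤ f(x) - ‖∇f‖²/(2β)
  have hdesc : ∀ q, f (q - (1/β) • f' q) ≤ f q - ‖f' q‖^2/(2*β) := by
    intro q
    have h := hsm q (q - (1/β) • f' q)
    have hd : (q - (1/β) • f' q) - q = -((1/β) • f' q) := by module
    rw [hd, inner_neg_right, real_inner_smul_right, real_inner_self_eq_norm_sq,
      norm_neg, norm_smul] at h
    simp only [Real.norm_eq_abs] at h
    have : |1/β| = 1/β := abs_of_pos (by positivity)
    rw [this] at h
    have : (1/β * ‖f' q‖)^2 = 1/β^2 * ‖f' q‖^2 := by ring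
    rw [this] at h
    have hexp : f q + -(1/β * ‖f' q‖^2) + β/2 * (1/β^2 * ‖f' q‖^2) = f q - ‖f' q‖^2/(2*β) := by
      field_simp; ring
    linarith [h, hexp.le, hexp.ge]
  -- μ and its properties
  set μ := 1/Real.sqrt (β/α) with hμ
  have hκ : 1 ≤ β/α := (one_le_div hα).2 hαβ
  have hsqrt : 1 ≤ Real.sqrt (β/α) := by
    rw [show (1:ℝ) = Real.sqrt 1 by simp]
    exact Real.sqrt_le_sqrt hκ
  have hsqrt0 : 0 < Real.sqrt (β/α) := lt_of_lt_of_le one_pos hsqrt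
  have hμ0 : 0 < μ := by positivity
  have hμ1 : μ ≤ 1 := by rw [hμ, div_le_one hsqrt0]; exact hsqrt
  have hμsq : μ^2 = α/β := by
    rw [hμ, div_pow, one_pow, Real.sq_sqrt (by positivity), one_div, inv_div]
  -- main induction
  intro k
  induction k with
  | zero =>
    refine ⟨?_, hmin _, ?_⟩
    · have := key 0 xstar
      nlinarith [sq_nonneg ‖xstar - c 0‖, norm_nonneg (xstar - c 0)]
    · simp
  | succ m ih =>
    obtain ⟨ih1, ih2, ih3⟩ := ih
    refine ⟨?_, hmin _, ?_⟩
    · have := key (m+1) xstar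
      nlinarith [sq_nonneg ‖xstar - c (m+1)‖]
    · -- rate
      obtain ⟨lam, hlam, hck, hvk, hopt⟩ := hQ (m+1) (by omega)
      simp only [Nat.add_sub_cancel] at hck hvk hopt
      have hvlb := hopt μ ⟨le_of_lt hμ0, hμ1⟩
      set g := f' (x (m+1)) with hg
      set d := α/2 * ‖(x (m+1) - (1/α) • g) - c m‖^2 with hd
      set D := ‖g‖^2/(2*α) with hD
      have hDnn : 0 ≤ D := by positivity
      -- d ≥ D
      have hdlb : D ≤ d := by
        have hexp := comp_sq hα' g (x (m+1)) (c m)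
        have hA := hls (m+1) (by omega)
        simp only [Nat.add_sub_cancel] at hA
        rw [← hg] at hA
        have hnn : 0 ≤ α/2 * ‖c m - x (m+1)‖^2 := by positivity
        have hsym : ‖x (m+1) - (1/α) • g - c m‖^2 = ‖c m - (x (m+1) - (1/α) • g)‖^2 := by
          rw [norm_sub_rev]
        rw [hd, hsym]
        nlinarith [hexp, hA, hnn]
      -- descent
      have hdesc' : f (x (m+1) - (1/β) • g) ≤ f (x (m+1)) - D * μ^2 := by
        have h := hdesc (x (m+1))
        have : ‖g‖^2/(2*β) = D * μ^2 := by
          rw [hD, hμsq]; field_simp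
        rw [← hg] at h
        linarith [h, this.le, this.ge]
      -- monotonicity of f along iterates
      have hfdec : f (x (m+1)) ≤ f (x m - (1/β) • f' (x m)) := by
        have h := hx_min (m+1) (by omega) 1 ⟨zero_le_one, le_refl 1⟩
        simp only [Nat.add_sub_cancel, one_smul] at h
        have : c m + ((x m - (1/β) • f' (x m)) - c m) = x m - (1/β) • f' (x m) := by module
        rwa [this] at h
      rw [pow_succ]
      set R := f (x 0 - (1/β) • f' (x 0)) - v 0 with hR
      set P := (1 - μ)^m with hP
      have hPnn : 0 ≤ P := pow_nonneg (by linarith) m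
      -- combine everything
      have e1 : f (x (m+1)) - D*μ^2 - (v m + (f (x (m+1)) - D - v m + d)*μ - d*μ^2)
          = (1-μ)*(f (x (m+1)) - v m) + (D - d)*(μ - μ^2) := by ring
      have e2 : (D - d)*(μ - μ^2) ≤ 0 := by
        nlinarith [mul_nonneg (sub_nonneg.2 hdlb) (mul_nonneg (le_of_lt hμ0) (sub_nonneg.2 hμ1))]
      have e3 : (1-μ)*(f (x (m+1)) - v m) ≤ (1-μ)*(f (x m - (1/β) • f' (x m)) - v m) := by
        have := sub_nonneg.2 hμ1
        nlinarith [mul_le_mul_of_nonneg_left hfdec (sub_nonneg.2 hμ1)]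
      have e4 : (1-μ)*(f (x m - (1/β) • f' (x m)) - v m) ≤ (1-μ)*(P*R) :=
        mul_le_mul_of_nonneg_left ih3 (sub_nonneg.2 hμ1)
      have e5 : (1-μ)*(P*R) = P*(1-μ)*R := by ring
      linarith [hvlb, hdesc', e1.le, e1.ge, e2, e3, e4, e5.le, e5.ge]
end

section
/- Key inductive step of the optimal rate proof: let α > 0, κ ≥ 1, and real numbers r, h², d² with h² > r/2 and d² ≥ h². Then r/√κ ≤ h²/κ + (d² + r − h²)²/(4d²). -/
theorem stmt13 (κ r h2 d2 : ℝ) (hκ : 1 ≤ κ) (hr : 0 < r) (hh2 : 0 < h2)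
    (hd2 : 0 < d2) (h1 : h2 > r/2) (h2d : d2 ≥ h2) :
    r / Real.sqrt κ ≤ h2/κ + (d2 + r - h2)^2 / (4*d2) := by
  set s := Real.sqrt κ with hs
  have hs0 : 1 ≤ s := by
    rw [hs, show (1:ℝ) = Real.sqrt 1 by simp]
    exact Real.sqrt_le_sqrt hκ
  have hsq : s ^ 2 = κ := Real.sq_sqrt (by linarith)
  have hkey : (r - h2)^2 ≤ h2 * d2 := by
    nlinarith [sq_nonneg (r - h2)]
  have A : r^2/(4*h2) ≤ (d2 + r - h2)^2 / (4*d2) := by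
    rw [div_le_div_iff₀ (by positivity) (by positivity)]
    nlinarith [mul_nonneg (sub_nonneg.mpr h2d) (sub_nonneg.mpr hkey)]
  have B : r / s ≤ h2/s^2 + r^2/(4*h2) := by
    have hspos : (0:ℝ) < s := by linarith
    rw [div_add_div _ _ (by positivity) (by positivity),
      div_le_div_iff₀ (by positivity) (by positivity)]
    nlinarith [mul_nonneg hspos.le (sq_nonneg (2*h2 - r*s))]
  rw [hsq] at B
  linarith
end

section
/- Let α > 0, x_A ≠ x_B ∈ ℝⁿ, v_A, v_B ∈ ℝ, and let Q̄(x) = v̄ + (α/2)‖x − c̄‖² be the optimal averaging of Q_A(x) = v_A + (α/2)‖x − x_A‖² and Q_B(x) = v_B + (α/2)‖x − x_B‖². Fix f̂ ≥ max(v_A, v_B) and set R_A² = (2/α)(f̂ − v_A), R_B² = (2/α)(f̂ − v_B), R² = (2/α)(f̂ − v̄). If |v_A − v_B| ≤ (α/2)‖x_A − x_B‖², then R² = R_B² − (‖x_A − x_B‖² + R_B² − R_A²)²/(4‖x_A − x_B‖²) and c̄ = (x_A + x_B)/2 − ((R_A² − R_B²)/(2‖x_A − x_B‖²))(x_A − x_B).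 -/
theorem stmt15 (n : ℕ) (xA xB : EuclideanSpace ℝ (Fin n)) (hAB : xA ≠ xB)
    (vA vB α fhat : ℝ) (hα : 0 < α) (hfhat : max vA vB ≤ fhat)
    (hclose : |vA - vB| ≤ α/2 * ‖xA - xB‖^2)
    (lam : ℝ) (hlam : lam = max 0 (min 1 (1/2 + (vA - vB)/(α * ‖xA - xB‖^2)))) :
    (2/α) * (fhat - (vB + (vA - vB + α/2 * ‖xA - xB‖^2) * lam
        - (α/2 * ‖xA - xB‖^2) * lam^2))
      = (2/α) * (fhat - vB)
        - (‖xA - xB‖^2 + (2/α) * (fhat - vB) - (2/α) * (fhat - vA))^2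
            / (4 * ‖xA - xB‖^2) ∧
    lam • xA + (1 - lam) • xB
      = (1/2 : ℝ) • (xA + xB)
        - (((2/α) * (fhat - vA) - (2/α) * (fhat - vB)) / (2 * ‖xA - xB‖^2))
            • (xA - xB) := by
  have ht : (0:ℝ) < ‖xA - xB‖^2 := by
    have : 0 < ‖xA - xB‖ := norm_sub_pos_iff.mpr hAB
    positivity
  set t : ℝ := ‖xA - xB‖^2 with htdef
  have habs : |(vA - vB)/(α * t)| ≤ 1/2 := by
    rw [abs_div, abs_of_pos (by positivity : (0:ℝ) < α * t)]
    rw [div_le_iff₀ (by positivity)]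
    calc |vA - vB| ≤ α/2 * t := hclose
      _ = 1/2 * (α * t) := by ring
  have h1 : (0:ℝ) ≤ 1/2 + (vA - vB)/(α * t) := by
    have := abs_le.mp habs
    linarith [this.1]
  have h2 : 1/2 + (vA - vB)/(α * t) ≤ 1 := by
    have := abs_le.mp habs
    linarith [this.2]
  have hl : lam = 1/2 + (vA - vB)/(α * t) := by
    rw [hlam, min_eq_right h2, max_eq_right h1]
  have hα' : α ≠ 0 := ne_of_gt hα
  have ht' : t ≠ 0 := ne_of_gt ht
  constructor
  · rw [hl]
    field_simp
    ring
  · have hc : (((2/α) * (fhat - vA) - (2/α) * (fhat - vB)) / (2 * t))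
        = (vB - vA)/(α * t) := by
      field_simp
      ring
    rw [hc, hl]
    have : (1 : ℝ) - (1/2 + (vA - vB)/(α * t)) = 1/2 + (vB - vA)/(α*t) := by
      field_simp; ring
    rw [this]
    have hsum : (1/2 + (vA - vB)/(α * t)) = 1/2 - (vB - vA)/(α*t) := by
      field_simp; ring
    rw [hsum]
    module
end

section
/- (Estimate sequence value recursion) Let f : ℝⁿ → ℝ be α-strongly convex and differentiable, and let Q_{k−1}(x) = v_{k−1} + (γ_{k−1}/2)‖x − c_{k−1}‖² with γ_{k−1} > 0. For λ ∈ (0,1) and a point x_k, define Q_k(x) = (1−λ)Q_{k−1}(x) + λ(f(x_k) − ‖∇f(x_k)‖²/(2α) + (α/2)‖x − x_k⁺⁺‖²) where x_k⁺⁺ = x_k − (1/α)∇f(x_k), and let γ_k = (1−λ)γ_{k−1} + λα, v_k = min_x Q_k(x). Then v_k = (1−λ)v_{k−1} + λf(x_k) − (λ²/(2γ_k))‖∇f(x_k)‖² + (λ(1−λ)γ_{k−1}/γ_k)((α/2)‖x_k − c_{k−1}‖² + ⟨∇f(x_k), c_{k−1} − x_k⟩). -/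
open scoped RealInnerProductSpace

theorem stmt18 (n : ℕ) (f : EuclideanSpace ℝ (Fin n) → ℝ)
    (f' : EuclideanSpace ℝ (Fin n) → EuclideanSpace ℝ (Fin n))
    (α : ℝ) (hα : 0 < α)
    (hdiff : ∀ p, HasGradientAt f (f' p) p)
    (hsc : ∀ p q, f p + ⟪f' p, q - p⟫ + α/2 * ‖q - p‖^2 ≤ f q)
    (γprev vprev : ℝ) (hγ : 0 < γprev)
    (cprev xk : EuclideanSpace ℝ (Fin n))
    (lam : ℝ) (hlam : lam ∈ Set.Ioo (0:ℝ) 1) :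
    IsLeast
      (Set.range fun x : EuclideanSpace ℝ (Fin n) =>
        (1 - lam) * (vprev + γprev/2 * ‖x - cprev‖^2)
          + lam * ((f xk - ‖f' xk‖^2/(2*α))
              + α/2 * ‖x - (xk - (1/α) • f' xk)‖^2))
      ((1 - lam) * vprev + lam * f xk
        - lam^2/(2*((1 - lam)*γprev + lam*α)) * ‖f' xk‖^2
        + (lam*(1 - lam)*γprev/((1 - lam)*γprev + lam*α))
            * (α/2 * ‖xk - cprev‖^2 + ⟪f' xk, cprev - xk⟫)) := by
  obtain ⟨hl0, hl1⟩ := hlam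
  set v : EuclideanSpace ℝ (Fin n) := f' xk with hv
  set g : ℝ := (1 - lam)*γprev + lam*α with hg
  have hgpos : 0 < g := by
    have : 0 < (1 - lam)*γprev := mul_pos (by linarith) hγ
    have : 0 < lam*α := mul_pos hl0 hα
    positivity
  have hgne : g ≠ 0 := ne_of_gt hgpos
  have hαne : α ≠ 0 := ne_of_gt hα
  set z : EuclideanSpace ℝ (Fin n) :=
    g⁻¹ • (((1 - lam)*γprev) • cprev + (lam*α) • (xk - α⁻¹ • v)) with hz
  set m : ℝ := (1 - lam) * vprev + lam * f xk
        - lam^2/(2*g) * ‖v‖^2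
        + (lam*(1 - lam)*γprev/g)
            * (α/2 * ‖xk - cprev‖^2 + ⟪v, cprev - xk⟫) with hm
  have key : ∀ x : EuclideanSpace ℝ (Fin n),
      (1 - lam) * (vprev + γprev/2 * ‖x - cprev‖^2)
          + lam * ((f xk - ‖v‖^2/(2*α))
              + α/2 * ‖x - (xk - (1/α) • v)‖^2)
        = m + g/2 * ‖x - z‖^2 := by
    intro x
    rw [hm, hz, hg]
    simp only [← real_inner_self_eq_norm_sq, inner_sub_left, inner_sub_right,
      inner_add_left, inner_add_right, real_inner_smul_left, real_inner_smul_right,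
      real_inner_comm cprev x, real_inner_comm xk x, real_inner_comm v x,
      real_inner_comm xk cprev, real_inner_comm v cprev, real_inner_comm v xk,
      one_div]
    field_simp
    ring
  constructor
  · exact ⟨z, by simpa using key z⟩
  · rintro y ⟨x, rfl⟩
    have h := key x
    have h2 : 0 ≤ g/2 * ‖x - z‖^2 := by positivity
    simp only [h]
    linarith
end
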